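/- arXiv:1812.09002 — 3 statements merged into one kernel-verified Lean document; each statement's English description precedes it below -/
import Mathlib

section
/- For every event-labeled gene tree (T;t,σ), the trivial map κ_{(T;t,σ)} is a MUL-reconciliation map from (T;t,σ) to the associated MUL-tree (M(T;t,σ),χ). -/
namespace Phylo

/-- A directed multigraph: `tail e` and `head e` give the endpoints of an arc `e`.
    Multi-arcs are allowed since distinct arcs may have the same endpoints. -/
structure MGraph (V : Type) (E : Type) where
  tail : E → V
  head : E → V

namespace MGraph

variable {V E : Type}

/-- `G.Adj u v` iff there is an arc from `u` to `v`. -/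
def Adj (G : MGraph V E) (u v : V) : Prop :=
  ∃ e : E, G.tail e = u ∧ G.head e = v

/-- `G.Reach u v` iff there is a directed path (possibly a single vertex) from `u` to `v`. -/
def Reach (G : MGraph V E) (u v : V) : Prop :=
  Relation.ReflTransGen G.Adj u v

/-- `G.vle v u` means `v ⪯ u` (i.e. `v` is a descendant of `u`). -/
def vle (G : MGraph V E) (v u : V) : Prop := G.Reach u v

/-- `G.vlt v u` means `v ≺ u` (i.e. `v` is strictly below `u`). -/
def vlt (G : MGraph V E) (v u : V) : Prop := G.Reach u v ∧ v ≠ u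

/-- indegree of a vertex -/
noncomputable def inDeg (G : MGraph V E) (v : V) : ℕ :=
  Nat.card {e : E // G.head e = v}

/-- outdegree of a vertex -/
noncomputable def outDeg (G : MGraph V E) (v : V) : ℕ :=
  Nat.card {e : E // G.tail e = v}

/-- `G` is a DAG. -/
def Acyclic (G : MGraph V E) : Prop :=
  ∀ v : V, ¬ Relation.TransGen G.Adj v v

/-- `G` has no multi-arcs. -/
def MultiArcFree (G : MGraph V E) : Prop :=
  ∀ e f : E, G.tail e = G.tail f → G.head e = G.head f → e = f

/-- A point of `V ∪ E`, where an arc is represented by its head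
    (used for extending `Q`-sets to arcs). -/
def hpt (G : MGraph V E) : V ⊕ E → V
  | Sum.inl v => v
  | Sum.inr e => G.head e

/-- A point of `V ∪ E`, where an arc is represented by its tail
    (used for extending `lca` to arcs). -/
def tpt (G : MGraph V E) : V ⊕ E → V
  | Sum.inl v => v
  | Sum.inr e => G.tail e

/-- The strict order `≺` on `V ∪ E`:
    `x ≺ y` for vertices means `x ⪯ y` and `x ≠ y`;
    a vertex `x ≺` an arc `e = (u,v)` iff `x ⪯ v`;
    an arc `e = (u,v) ≺` a vertex `x` iff `u ⪯ x`;
    for arcs `e = (u,v)` and `f = (a,b)`: `e ≺ f` iff `v ≺ u ⪯ b ≺ a`. -/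
def slt (G : MGraph V E) : V ⊕ E → V ⊕ E → Prop
  | Sum.inl x, Sum.inl y => G.vlt x y
  | Sum.inl x, Sum.inr e => G.vle x (G.head e)
  | Sum.inr e, Sum.inl x => G.vle (G.tail e) x
  | Sum.inr e, Sum.inr f =>
      G.vlt (G.head e) (G.tail e) ∧ G.vle (G.tail e) (G.head f) ∧
        G.vlt (G.head f) (G.tail f)

/-- The (non-strict) order `⪯` on `V ∪ E`. -/
def sle (G : MGraph V E) (a b : V ⊕ E) : Prop := a = b ∨ G.slt a b

/-- `Q_N(x,y)`: the set of vertices `z` admitting directed paths from `z` to `x`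
    and from `z` to `y` which are separated by `z`, i.e. start with different
    children of `z`. -/
def QSet (G : MGraph V E) (x y : V) : Set V :=
  {z | ∃ c₁ c₂ : V, c₁ ≠ c₂ ∧ G.Adj z c₁ ∧ G.Adj z c₂ ∧ G.Reach c₁ x ∧ G.Reach c₂ y}

/-- `l` is the least common ancestor of the set `A`:
    a `⪯`-minimal common ancestor of all of `A`. -/
def IsLca (G : MGraph V E) (A : Set V) (l : V) : Prop :=
  (∀ a ∈ A, G.Reach l a) ∧ ∀ l' : V, (∀ a ∈ A, G.Reach l' a) → G.Reach l' l

/-- A directed path, given as its (nonempty, repetition-free) list of vertices. -/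
def IsDiPath (G : MGraph V E) (p : List V) : Prop :=
  p ≠ [] ∧ p.Chain' G.Adj ∧ p.Nodup

end MGraph

/-- Event labels for inner vertices of gene trees: speciation or duplication. -/
inductive Event : Type
  | spec : Event
  | dupl : Event
  deriving DecidableEq

variable {V E W F D U S : Type}

/-- `(G, lv, ρ)` is a (rooted phylogenetic) network with leaf set `lv` and root `ρ`:
    (N1) the root has indegree 0 and outdegree 1 and its unique child has
    indegree 1 and outdegree at least 2;
    (N2) the leaves are exactly the vertices of outdegree 0 and indegree 1;
    (N3) every other non-leaf vertex is a tree vertex (indegree 1, outdegree > 1)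
    or a hybrid vertex (indegree > 1, outdegree 1);
    moreover the leaf set has at least two elements and everything is finite. -/
structure IsNetwork (G : MGraph V E) (lv : Set V) (ρ : V) : Prop where
  finV : Finite V
  finE : Finite E
  acyclic : G.Acyclic
  root_in : G.inDeg ρ = 0
  root_out : G.outDeg ρ = 1
  root_child : ∀ c : V, G.Adj ρ c → G.inDeg c = 1 ∧ 2 ≤ G.outDeg c
  leaf_iff : ∀ v : V, v ∈ lv ↔ (G.outDeg v = 0 ∧ G.inDeg v = 1)
  inner_deg : ∀ v : V, v ∉ lv → v ≠ ρ →
      (G.inDeg v = 1 ∧ 2 ≤ G.outDeg v) ∨ (2 ≤ G.inDeg v ∧ G.outDeg v = 1)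
  two_leaves : ∃ a b : V, a ∈ lv ∧ b ∈ lv ∧ a ≠ b

/-- no hybrid vertices -/
def NoHybrid (G : MGraph V E) : Prop := ∀ v : V, G.inDeg v ≤ 1

/-- A (rooted) phylogenetic tree: a multi-arc free network without hybrid vertices. -/
def IsPhyloTree (G : MGraph V E) (lv : Set V) (ρ : V) : Prop :=
  IsNetwork G lv ρ ∧ G.MultiArcFree ∧ NoHybrid G

/-- A network (or tree) "on 𝕊": its leaves are in bijection with the species set `S`
    via the labeling `sp`. -/
structure IsLeafLabeling (G : MGraph V E) (lv : Set V) (sp : S → V) : Prop where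
  inj : Function.Injective sp
  mem : ∀ s : S, sp s ∈ lv
  surj : ∀ v ∈ lv, ∃ s : S, sp s = v

/-- `(G, lv, ρ, σ)` is the underlying structure of an event-labeled gene tree on the
    gene set `lv`: a reduced tree (root of indegree 0 and outdegree ≥ 2, all other
    inner vertices of indegree 1 and outdegree ≥ 2) together with a surjective
    gene-species map `σ` whose image has more than one element. -/
structure IsGeneTree (G : MGraph V E) (lv : Set V) (ρ : V) (σ : V → S) : Prop where
  finV : Finite V
  finE : Finite E
  acyclic : G.Acyclic
  multiarc_free : G.MultiArcFree
  root_in : G.inDeg ρ = 0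
  root_out : 2 ≤ G.outDeg ρ
  leaf_iff : ∀ v : V, v ∈ lv ↔ (G.outDeg v = 0 ∧ G.inDeg v = 1)
  inner_deg : ∀ v : V, v ∉ lv → v ≠ ρ → G.inDeg v = 1 ∧ 2 ≤ G.outDeg v
  sigma_surj : ∀ s : S, ∃ g ∈ lv, σ g = s
  sigma_nontriv : ∃ g g' : V, g ∈ lv ∧ g' ∈ lv ∧ σ g ≠ σ g'

/-- `L_T(x)`: the set of leaves below or equal to `x`. -/
def leavesBelow (G : MGraph V E) (lv : Set V) (x : V) : Set V :=
  {g | g ∈ lv ∧ G.Reach x g}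

/-- A TreeNet-reconciliation map `μ` from the event-labeled gene tree `(T;t,σ)`
    to the network `N` (with species labeling `sp`):
    (R1) leaves are mapped to the species containing them;
    (R2.i) a speciation vertex is mapped to a vertex of `N` separating the images
    of two of its children (i.e. `μ x ∈ Q²`);
    (R2.ii) a duplication vertex is mapped to an arc of `N`;
    (R3) ancestor relations are preserved (strictly, unless both events are
    duplications). -/
structure IsTreeNetRecon (T : MGraph V E) (lvT : Set V) (t : V → Event) (σ : V → S)
    (N : MGraph W F) (sp : S → W) (μ : V → W ⊕ F) : Prop where
  R1 : ∀ x ∈ lvT, μ x = Sum.inl (sp (σ x))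
  R2i : ∀ x : V, x ∉ lvT → t x = Event.spec →
      ∃ w : W, μ x = Sum.inl w ∧ ∃ c₁ c₂ : V, T.Adj x c₁ ∧ T.Adj x c₂ ∧
        w ∈ N.QSet (N.hpt (μ c₁)) (N.hpt (μ c₂))
  R2ii : ∀ x : V, x ∉ lvT → t x = Event.dupl → ∃ e : F, μ x = Sum.inr e
  R3d : ∀ x y : V, T.vlt x y → x ∉ lvT → y ∉ lvT →
      t x = Event.dupl → t y = Event.dupl → N.sle (μ x) (μ y)
  R3s : ∀ x y : V, T.vlt x y →
      ¬ (x ∉ lvT ∧ y ∉ lvT ∧ t x = Event.dupl ∧ t y = Event.dupl) →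
      N.slt (μ x) (μ y)

/-- `(M, lv, ρ, χ)` is a pseudo MUL-tree on the species set `S`:
    a rooted tree (possibly with indegree-1 outdegree-1 vertices) whose root has
    indegree 0 and outdegree 1, together with a labeling `χ` of the leaves by `S`
    with pairwise disjoint nonempty classes covering all leaves. -/
structure IsPMULTree (M : MGraph D U) (lv : Set D) (ρ : D) (χ : S → Set D) : Prop where
  finD : Finite D
  finU : Finite U
  acyclic : M.Acyclic
  root_in : M.inDeg ρ = 0
  root_out : M.outDeg ρ = 1
  leaf_iff : ∀ v : D, v ∈ lv ↔ (M.outDeg v = 0 ∧ M.inDeg v = 1)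
  inner_deg : ∀ v : D, v ∉ lv → v ≠ ρ → M.inDeg v = 1 ∧ 1 ≤ M.outDeg v
  chi_sub : ∀ x : S, χ x ⊆ lv
  chi_ne : ∀ x : S, (χ x).Nonempty
  chi_disj : ∀ x y : S, x ≠ y → Disjoint (χ x) (χ y)
  chi_cover : ∀ l ∈ lv, ∃ x : S, l ∈ χ x
  species_nontriv : ∃ x y : S, x ≠ y

/-- A MUL-tree is a pseudo MUL-tree whose underlying tree is a phylogenetic tree,
    i.e., without indegree-1 outdegree-1 vertices. -/
def IsMULTree (M : MGraph D U) (lv : Set D) (ρ : D) (χ : S → Set D) : Prop :=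
  IsPMULTree M lv ρ χ ∧ ∀ v : D, v ∉ lv → v ≠ ρ → 2 ≤ M.outDeg v

/-- `D¹`: the set of vertices with indegree one and outdegree one. -/
def D1set (M : MGraph D U) : Set D := {v | M.inDeg v = 1 ∧ M.outDeg v = 1}

/-- A MUL-reconciliation map `κ : V → (D∖D¹) ∪ U` from the event-labeled gene tree
    `(T;t,σ)` to the pseudo MUL-tree `(M,χ)`:
    (M1) each leaf maps to a leaf of `M` labeled by its species;
    (M2.i) a speciation vertex maps to an inner vertex of `M` admitting directed
    paths to the images of two distinct children whose first arcs are incomparable;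
    (M2.ii) a duplication vertex maps to an arc;
    (M3) ancestor relations are preserved (strictly, unless both are duplications). -/
structure IsMULRecon (T : MGraph V E) (lvT : Set V) (t : V → Event) (σ : V → S)
    (M : MGraph D U) (lvM : Set D) (χ : S → Set D) (κ : V → D ⊕ U) : Prop where
  M0 : ∀ (x : V) (d : D), κ x = Sum.inl d → d ∉ D1set M
  M1 : ∀ x ∈ lvT, ∃ d : D, κ x = Sum.inl d ∧ d ∈ lvM ∧ d ∈ χ (σ x)
  M2i : ∀ x : V, x ∉ lvT → t x = Event.spec →
      ∃ d : D, κ x = Sum.inl d ∧ d ∉ lvM ∧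
        ∃ c₁ c₂ : V, T.Adj x c₁ ∧ T.Adj x c₂ ∧ c₁ ≠ c₂ ∧
          ∃ a₁ a₂ : U, M.tail a₁ = d ∧ M.tail a₂ = d ∧
            M.Reach (M.head a₁) (M.hpt (κ c₁)) ∧
            M.Reach (M.head a₂) (M.hpt (κ c₂)) ∧
            ¬ M.sle (Sum.inr a₁) (Sum.inr a₂) ∧ ¬ M.sle (Sum.inr a₂) (Sum.inr a₁)
  M2ii : ∀ x : V, x ∉ lvT → t x = Event.dupl → ∃ a : U, κ x = Sum.inr a
  M3d : ∀ x y : V, T.vlt x y → x ∉ lvT → y ∉ lvT →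
      t x = Event.dupl → t y = Event.dupl → M.sle (κ x) (κ y)
  M3s : ∀ x y : V, T.vlt x y →
      ¬ (x ∉ lvT ∧ y ∉ lvT ∧ t x = Event.dupl ∧ t y = Event.dupl) →
      M.slt (κ x) (κ y)

/-- `x` is a species with at least two leaves labeled by it. -/
def MultiSp (χ : S → Set D) (x : S) : Prop :=
  ∃ l₁ l₂ : D, l₁ ∈ χ x ∧ l₂ ∈ χ x ∧ l₁ ≠ l₂

/-- Vertices of the network obtained by folding up (the simple subdivision of) a
    MUL-tree: the inner vertices of the MUL-tree, a leaf for each species, and a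
    hybrid vertex for each species labeling at least two leaves. -/
def FoldV (D S : Type) (lv : Set D) (χ : S → Set D) : Type :=
  {d : D // d ∉ lv} ⊕ (S ⊕ {x : S // MultiSp χ x})

/-- Arcs of the folded-up network: the arcs of the MUL-tree (redirected), plus one
    arc `(par x, x)` for every species `x` labeling at least two leaves. -/
def FoldE (U : Type) {D S : Type} (χ : S → Set D) : Type :=
  U ⊕ {x : S // MultiSp χ x}

open Classical in
/-- The digraph obtained from the simple subdivision of the MUL-tree `(M,χ)` by
    identifying, for each species `x`, all arcs whose head is a leaf in `χ x`
    to a single arc `(par x, x)`. -/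
noncomputable def foldGraph (M : MGraph D U) (lv : Set D) (χ : S → Set D)
    (htail : ∀ e : U, M.tail e ∉ lv)
    (hcov : ∀ d ∈ lv, ∃ x : S, d ∈ χ x) :
    MGraph (FoldV D S lv χ) (FoldE U χ) where
  tail a :=
    match a with
    | Sum.inl e => Sum.inl ⟨M.tail e, htail e⟩
    | Sum.inr x => Sum.inr (Sum.inr x)
  head a :=
    match a with
    | Sum.inl e =>
        if h : M.head e ∈ lv then
          if hm : MultiSp χ (Classical.choose (hcov _ h)) then
            Sum.inr (Sum.inr ⟨Classical.choose (hcov _ h), hm⟩)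
          else Sum.inr (Sum.inl (Classical.choose (hcov _ h)))
        else Sum.inl ⟨M.head e, h⟩
    | Sum.inr x => Sum.inr (Sum.inl x.1)

/-- Leaves of the folded-up network: one for each species. -/
def foldLeaves (lv : Set D) (χ : S → Set D) : Set (FoldV D S lv χ) :=
  Set.range fun x : S => Sum.inr (Sum.inl x)

/-- Species labeling of the folded-up network. -/
def foldSp (lv : Set D) (χ : S → Set D) : S → FoldV D S lv χ :=
  fun x => Sum.inr (Sum.inl x)

/-- Root of the folded-up network. -/
def foldRoot (lv : Set D) (χ : S → Set D) (ρ : D) (hρ : ρ ∉ lv) : FoldV D S lv χ :=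
  Sum.inl ⟨ρ, hρ⟩

/-- The tree `M(T;t,σ)` associated to an event-labeled gene tree: `T` together with
    a new root `Sum.inr ()` and a new arc from it to the old root. -/
def geneMULGraph (T : MGraph V E) (ρT : V) : MGraph (V ⊕ Unit) (E ⊕ Unit) where
  tail a :=
    match a with
    | Sum.inl e => Sum.inl (T.tail e)
    | Sum.inr _ => Sum.inr ()
  head a :=
    match a with
    | Sum.inl e => Sum.inl (T.head e)
    | Sum.inr _ => Sum.inl ρT

/-- Leaves of `M(T;t,σ)`: the genes. -/
def geneMULLeaves (lvT : Set V) : Set (V ⊕ Unit) := Sum.inl '' lvT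

/-- Leaf labeling of `M(T;t,σ)`: `χ x` consists of the genes `g` with `σ g = x`. -/
def geneMULChi (lvT : Set V) (σ : V → S) : S → Set (V ⊕ Unit) :=
  fun x => {d | ∃ g : V, g ∈ lvT ∧ σ g = x ∧ d = Sum.inl g}

theorem geneMUL_tail (T : MGraph V E) (lvT : Set V) (ρT : V)
    (htail : ∀ e : E, T.tail e ∉ lvT) :
    ∀ a : E ⊕ Unit, (geneMULGraph T ρT).tail a ∉ geneMULLeaves lvT := by
  intro a
  cases a with
  | inl e =>
    rintro ⟨g, hg, hEq⟩
    have hg' : g = T.tail e := Sum.inl.inj hEq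
    exact htail e (hg' ▸ hg)
  | inr u =>
    rintro ⟨g, hg, hEq⟩
    exact Sum.inl_ne_inr hEq

theorem geneMUL_cover (lvT : Set V) (σ : V → S) :
    ∀ d ∈ geneMULLeaves lvT, ∃ x : S, d ∈ geneMULChi lvT σ x := by
  rintro d ⟨g, hg, rfl⟩
  exact ⟨σ g, g, hg, rfl, rfl⟩

theorem geneMUL_root_not_leaf (lvT : Set V) :
    (Sum.inr () : V ⊕ Unit) ∉ geneMULLeaves lvT := by
  rintro ⟨g, hg, hEq⟩
  exact Sum.inl_ne_inr hEq

/-- The species network `N` obtained from the simple subdivision of the MUL-tree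
    `(M(T;t,σ),χ)` by identifying, for each species `x`, all arcs whose head is a
    leaf in `χ x` to a single arc `(par x, x)`. -/
noncomputable def geneNetGraph (T : MGraph V E) (lvT : Set V) (ρT : V) (σ : V → S)
    (htail : ∀ e : E, T.tail e ∉ lvT) :
    MGraph (FoldV (V ⊕ Unit) S (geneMULLeaves lvT) (geneMULChi lvT σ))
      (FoldE (E ⊕ Unit) (geneMULChi lvT σ)) :=
  foldGraph (geneMULGraph T ρT) (geneMULLeaves lvT) (geneMULChi lvT σ)
    (geneMUL_tail T lvT ρT htail) (geneMUL_cover lvT σ)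

noncomputable def geneNetLeaves (lvT : Set V) (σ : V → S) :
    Set (FoldV (V ⊕ Unit) S (geneMULLeaves lvT) (geneMULChi lvT σ)) :=
  foldLeaves (geneMULLeaves lvT) (geneMULChi lvT σ)

noncomputable def geneNetSp (lvT : Set V) (σ : V → S) :
    S → FoldV (V ⊕ Unit) S (geneMULLeaves lvT) (geneMULChi lvT σ) :=
  foldSp (geneMULLeaves lvT) (geneMULChi lvT σ)

noncomputable def geneNetRoot (lvT : Set V) (σ : V → S) :
    FoldV (V ⊕ Unit) S (geneMULLeaves lvT) (geneMULChi lvT σ) :=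
  foldRoot (geneMULLeaves lvT) (geneMULChi lvT σ) (Sum.inr ())
    (geneMUL_root_not_leaf lvT)

open Classical in
/-- The trivial map `κ_{(T;t,σ)}` from the gene tree to its associated MUL-tree
    `(M(T;t,σ),χ)`: leaves map to themselves (their species-labeled copies),
    speciation vertices map to themselves, and a duplication vertex maps to its
    unique incoming arc (the newly added root arc, for the old root). -/
noncomputable def trivialKappa (T : MGraph V E) (lvT : Set V) (ρT : V)
    (t : V → Event)
    (hinc : ∀ v : V, v ∉ lvT → v ≠ ρT → ∃ e : E, T.head e = v) (v : V) :
    (V ⊕ Unit) ⊕ (E ⊕ Unit) :=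
  if hL : v ∈ lvT then Sum.inl (Sum.inl v)
  else if t v = Event.spec then Sum.inl (Sum.inl v)
  else if hρ : v = ρT then Sum.inr (Sum.inr ())
  else Sum.inr (Sum.inl (Classical.choose (hinc v hL hρ)))


/-! In `M(T;t,σ)` every vertex `x` of `T` has exactly one incoming arc, and the trivial map
sends `x` either to `x` itself or to that arc; in both cases its "head point" is `x`. For
`x ≺ y` in `T` each of the four clauses defining `≺` on vertices and arcs of `M(T;t,σ)` then
reduces to `x ≺ y`, using that the unique arc into `x` starts at a descendant of `y`. A
speciation vertex is sent to itself, and the arcs to two distinct children witness (M2.i):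
they are incomparable since comparability would close a cycle. -/

namespace MGraph

variable {G : MGraph V E}

theorem vlt_head_tail (hG : G.Acyclic) (a : E) : G.vlt (G.head a) (G.tail a) :=
  ⟨.single ⟨a, rfl, rfl⟩, fun h => hG _ (.single ⟨a, rfl, h⟩)⟩

theorem reach_tail_of_reach_head {u v : V} [Subsingleton {a : E // G.head a = v}]
    (huv : G.Reach u v) (hne : u ≠ v) {a : E} (ha : G.head a = v) :
    G.Reach u (G.tail a) := by
  rcases huv.cases_tail with rfl | ⟨c, huc, b, rfl, hb⟩
  · exact absurd rfl hne
  · obtain rfl : b = a :=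
      congrArg Subtype.val (Subsingleton.elim (α := {a // G.head a = v}) ⟨b, hb⟩ ⟨a, ha⟩)
    exact huc

theorem slt_of_vlt (hG : G.Acyclic) {x y : V} [Subsingleton {a : E // G.head a = x}]
    (hxy : G.vlt x y) {p q : V ⊕ E} (hp : G.hpt p = x) (hq : G.hpt q = y) : G.slt p q := by
  obtain ⟨hyx, hne⟩ := hxy
  rcases p with x' | a <;> rcases q with y' | b <;> simp only [hpt] at hp hq <;> subst hp hq
  · exact ⟨hyx, hne⟩
  · exact hyx
  · exact reach_tail_of_reach_head hyx (Ne.symm hne) rfl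
  · exact ⟨vlt_head_tail hG a, reach_tail_of_reach_head hyx (Ne.symm hne) rfl,
      vlt_head_tail hG b⟩

theorem not_sle_of_tail_eq (hG : G.Acyclic) {a b : E} (hab : a ≠ b)
    (h : G.tail a = G.tail b) : ¬ G.sle (.inr a) (.inr b) := by
  rintro (h' | ⟨-, hba, -⟩)
  · exact hab (Sum.inr.inj h')
  · exact hG _ (Relation.TransGen.head' ⟨b, h.symm, rfl⟩ hba)

end MGraph

namespace IsGeneTree

variable {T : MGraph V E} {lvT : Set V} {ρT : V} {σ : V → S}

theorem head_ne_root (hT : IsGeneTree T lvT ρT σ) (e : E) : T.head e ≠ ρT := by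
  have := hT.finE
  exact fun h => (Finite.card_eq_zero_iff.1 hT.root_in).false ⟨e, h⟩

theorem head_injective (hT : IsGeneTree T lvT ρT σ) : Function.Injective T.head := by
  intro e f hef
  have hρ := hT.head_ne_root e
  have hin : T.inDeg (T.head e) = 1 := by
    by_cases hL : T.head e ∈ lvT
    · exact ((hT.leaf_iff _).1 hL).2
    · exact (hT.inner_deg _ hL hρ).1
  have := (Nat.card_eq_one_iff_unique.1 hin).1
  exact congrArg Subtype.val
    (Subsingleton.elim (α := {a // T.head a = T.head e}) ⟨e, rfl⟩ ⟨f, hef.symm⟩)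

theorem two_le_outDeg (hT : IsGeneTree T lvT ρT σ) {x : V} (hx : x ∉ lvT) :
    2 ≤ T.outDeg x := by
  by_cases hρ : x = ρT
  · exact hρ ▸ hT.root_out
  · exact (hT.inner_deg x hx hρ).2

theorem outDeg_ne_one (hT : IsGeneTree T lvT ρT σ) (x : V) : T.outDeg x ≠ 1 := by
  by_cases hx : x ∈ lvT
  · simp [((hT.leaf_iff x).1 hx).1]
  · have := hT.two_le_outDeg hx
    omega

theorem exists_children_ne (hT : IsGeneTree T lvT ρT σ) {x : V} (hx : x ∉ lvT) :
    ∃ e₁ e₂ : E, T.tail e₁ = x ∧ T.tail e₂ = x ∧ T.head e₁ ≠ T.head e₂ := by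
  have := hT.finE
  have : Nontrivial {e : E // T.tail e = x} :=
    Finite.one_lt_card_iff_nontrivial.1 (hT.two_le_outDeg hx)
  obtain ⟨⟨e₁, h₁⟩, ⟨e₂, h₂⟩, hne⟩ := exists_pair_ne {e : E // T.tail e = x}
  exact ⟨e₁, e₂, h₁, h₂,
    fun h => hne (Subtype.ext (hT.multiarc_free _ _ (h₁.trans h₂.symm) h))⟩

end IsGeneTree

section geneMULGraph

variable {T : MGraph V E} {ρT : V}

theorem geneMULGraph_adj_inl {u : V} {w : V ⊕ Unit}
    (h : (geneMULGraph T ρT).Adj (.inl u) w) : ∃ v, w = .inl v ∧ T.Adj u v := by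
  obtain ⟨e | _, he, rfl⟩ := h
  · exact ⟨T.head e, rfl, e, Sum.inl.inj he, rfl⟩
  · exact (Sum.inr_ne_inl he).elim

theorem geneMULGraph_reach_inl {u v : V} (h : T.Reach u v) :
    (geneMULGraph T ρT).Reach (.inl u) (.inl v) :=
  h.lift _ fun _ _ ⟨e, h₁, h₂⟩ => ⟨.inl e, congrArg _ h₁, congrArg _ h₂⟩

theorem geneMULGraph_vlt_inl {x y : V} (h : T.vlt x y) :
    (geneMULGraph T ρT).vlt (.inl x) (.inl y) :=
  ⟨geneMULGraph_reach_inl h.1, fun h' => h.2 (Sum.inl.inj h')⟩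

theorem geneMULGraph_transGen_inl {u : V} {w : V ⊕ Unit}
    (h : Relation.TransGen (geneMULGraph T ρT).Adj (.inl u) w) :
    ∃ v, w = .inl v ∧ Relation.TransGen T.Adj u v := by
  induction h with
  | single h =>
    obtain ⟨v, rfl, huv⟩ := geneMULGraph_adj_inl h
    exact ⟨v, rfl, .single huv⟩
  | tail _ h ih =>
    obtain ⟨_, rfl, huv⟩ := ih
    obtain ⟨v, rfl, hv⟩ := geneMULGraph_adj_inl h
    exact ⟨v, rfl, huv.tail hv⟩

theorem geneMULGraph_acyclic (hT : T.Acyclic) : (geneMULGraph T ρT).Acyclic := by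
  rintro (v | _) h
  · obtain ⟨_, hv, h⟩ := geneMULGraph_transGen_inl h
    cases Sum.inl.inj hv
    exact hT v h
  -- no arc of `M(T;t,σ)` ends in the new root
  · obtain ⟨_, -, e | _, -, he⟩ := Relation.TransGen.tail'_iff.1 h <;> cases he

theorem geneMULGraph_outDeg_inl (v : V) :
    (geneMULGraph T ρT).outDeg (.inl v) = T.outDeg v :=
  Nat.card_congr
    { toFun := fun
        | ⟨.inl e, h⟩ => ⟨e, Sum.inl.inj h⟩
        | ⟨.inr _, h⟩ => (Sum.inr_ne_inl h).elim
      invFun := fun e => ⟨.inl e.1, congrArg Sum.inl e.2⟩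
      left_inv := by
        rintro ⟨_ | _, h⟩
        · rfl
        · exact (Sum.inr_ne_inl h).elim
      right_inv := fun _ => rfl }

theorem IsGeneTree.subsingleton_geneMULGraph_head {lvT : Set V} {σ : V → S}
    (hT : IsGeneTree T lvT ρT σ) (x : V) :
    Subsingleton {a : E ⊕ Unit // (geneMULGraph T ρT).head a = .inl x} := by
  refine ⟨fun ⟨a, ha⟩ ⟨b, hb⟩ => Subtype.ext ?_⟩
  rcases a with e | _ <;> rcases b with f | _
  · exact congrArg Sum.inl (hT.head_injective (Sum.inl.inj (ha.trans hb.symm)))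
  · exact (hT.head_ne_root e (Sum.inl.inj (ha.trans hb.symm))).elim
  · exact (hT.head_ne_root f (Sum.inl.inj (hb.trans ha.symm))).elim
  · rfl

end geneMULGraph

section trivialKappa

variable {T : MGraph V E} {lvT : Set V} {ρT : V} {t : V → Event}
  {hinc : ∀ v : V, v ∉ lvT → v ≠ ρT → ∃ e : E, T.head e = v}

theorem trivialKappa_of_mem {x : V} (hx : x ∈ lvT) :
    trivialKappa T lvT ρT t hinc x = .inl (.inl x) :=
  dif_pos hx

theorem trivialKappa_of_spec {x : V} (hx : x ∉ lvT) (hs : t x = .spec) :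
    trivialKappa T lvT ρT t hinc x = .inl (.inl x) := by
  rw [trivialKappa, dif_neg hx, if_pos hs]

theorem trivialKappa_of_dupl {x : V} (hx : x ∉ lvT) (hd : t x = .dupl) :
    ∃ a, trivialKappa T lvT ρT t hinc x = .inr a := by
  rw [trivialKappa, dif_neg hx, if_neg (by simp [hd])]
  split_ifs <;> exact ⟨_, rfl⟩

theorem hpt_trivialKappa (x : V) :
    (geneMULGraph T ρT).hpt (trivialKappa T lvT ρT t hinc x) = .inl x := by
  unfold trivialKappa
  split_ifs with hL hs hρ
  · rfl
  · rfl
  · exact congrArg Sum.inl hρ.symm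
  · exact congrArg Sum.inl (Classical.choose_spec (hinc x hL hρ))

variable {σ : V → S}

theorem IsGeneTree.notMem_D1set_of_trivialKappa_eq (hT : IsGeneTree T lvT ρT σ) {x : V}
    {d : V ⊕ Unit} (hd : trivialKappa T lvT ρT t hinc x = .inl d) :
    d ∉ D1set (geneMULGraph T ρT) := by
  obtain rfl : d = .inl x := (congrArg (geneMULGraph T ρT).hpt hd).symm.trans (hpt_trivialKappa x)
  rintro ⟨-, hout⟩
  exact hT.outDeg_ne_one x (geneMULGraph_outDeg_inl x ▸ hout)

theorem IsGeneTree.slt_trivialKappa (hT : IsGeneTree T lvT ρT σ) {x y : V}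
    (hxy : T.vlt x y) :
    (geneMULGraph T ρT).slt (trivialKappa T lvT ρT t hinc x)
      (trivialKappa T lvT ρT t hinc y) :=
  have := hT.subsingleton_geneMULGraph_head
  MGraph.slt_of_vlt (geneMULGraph_acyclic hT.acyclic) (geneMULGraph_vlt_inl hxy)
    (hpt_trivialKappa x) (hpt_trivialKappa y)

end trivialKappa

/-- For every event-labeled gene tree `(T;t,σ)`, the trivial map
    `κ_{(T;t,σ)}` is a MUL-reconciliation map from `(T;t,σ)` to the associated
    MUL-tree `(M(T;t,σ),χ)`. -/
theorem trivial_map_is_mul_recon {V E S : Type}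
    (T : MGraph V E) (lvT : Set V) (ρT : V) (t : V → Event) (σ : V → S)
    (hT : IsGeneTree T lvT ρT σ)
    (hinc : ∀ v : V, v ∉ lvT → v ≠ ρT → ∃ e : E, T.head e = v) :
    IsMULRecon T lvT t σ (geneMULGraph T ρT) (geneMULLeaves lvT)
      (geneMULChi lvT σ) (trivialKappa T lvT ρT t hinc) := by
  have hM := geneMULGraph_acyclic (ρT := ρT) hT.acyclic
  refine ⟨fun _ _ => hT.notMem_D1set_of_trivialKappa_eq, ?_, ?_,
    fun x hx hd => trivialKappa_of_dupl hx hd,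
    fun x y hxy _ _ _ _ => .inr (hT.slt_trivialKappa hxy),
    fun x y hxy _ => hT.slt_trivialKappa hxy⟩
  · intro x hx
    exact ⟨_, trivialKappa_of_mem hx, ⟨x, hx, rfl⟩, x, hx, rfl, rfl⟩
  · intro x hx hs
    obtain ⟨e₁, e₂, h₁, h₂, hne⟩ := hT.exists_children_ne hx
    have hne_arc : (Sum.inl e₁ : E ⊕ Unit) ≠ .inl e₂ :=
      fun h => hne (congrArg T.head (Sum.inl.inj h))
    have htail : (geneMULGraph T ρT).tail (.inl e₁) = (geneMULGraph T ρT).tail (.inl e₂) :=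
      congrArg Sum.inl (h₁.trans h₂.symm)
    refine ⟨_, trivialKappa_of_spec hx hs, Sum.inl_injective.mem_set_image.not.2 hx,
      _, _, ⟨e₁, h₁, rfl⟩, ⟨e₂, h₂, rfl⟩, hne, .inl e₁, .inl e₂, congrArg Sum.inl h₁,
      congrArg Sum.inl h₂, ?_, ?_, MGraph.not_sle_of_tail_eq hM hne_arc htail,
      MGraph.not_sle_of_tail_eq hM hne_arc.symm htail.symm⟩
    all_goals rw [hpt_trivialKappa]; exact .refl

end Phylo
end

section
/- Suppose (T;t,σ) is an event-labeled gene tree and (M,χ) is a MUL-tree. If there is a MUL-reconciliation map from (T;t,σ) to (M,χ), then there is a MUL-reconciliation map from (T;t,σ) to any subdivision (M',χ) of (M,χ). -/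
namespace Phylo

variable {V E W F D U S : Type}

/-- The internal vertices of a path given as a vertex list. -/
def internals (p : List V) : List V := (p.drop 1).dropLast

/-- `(M', lv', ρ', χ')` is a subdivision of the (pseudo) MUL-tree `(M, lv, ρ, χ)`:
    `M'` is obtained from `M` by replacing each arc by a directed path.
    The map `ι` embeds the vertices of `M` into `M'` and `P e` is the directed path
    of `M'` replacing the arc `e`; the internal vertices of these paths are new,
    pairwise distinct, and together with the `ι`-images exhaust `M'`; every arc of
    `M'` lies on one of these paths. -/
def IsSubdivisionOf {D' U' : Type} (M' : MGraph D' U') (lv' : Set D') (ρ' : D')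
    (χ' : S → Set D') (M : MGraph D U) (lv : Set D) (ρ : D) (χ : S → Set D) : Prop :=
  ∃ (ι : D → D') (P : U → List D'),
    Function.Injective ι ∧ ρ' = ι ρ ∧ lv' = ι '' lv ∧ (∀ x : S, χ' x = ι '' χ x) ∧
    (∀ e : U, M'.IsDiPath (P e) ∧ (P e).head? = some (ι (M.tail e)) ∧
        (P e).getLast? = some (ι (M.head e))) ∧
    (∀ e : U, ∀ w ∈ internals (P e), ¬ ∃ d : D, ι d = w) ∧
    (∀ e f : U, e ≠ f → ∀ w : D', w ∈ internals (P e) → w ∉ internals (P f)) ∧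
    (∀ w : D', (∃ d : D, ι d = w) ∨ ∃ e : U, w ∈ internals (P e)) ∧
    (∀ a : U', ∃ (e : U) (l₁ l₂ : List D'),
        P e = l₁ ++ M'.tail a :: M'.head a :: l₂)

/-!
Send every vertex of `M` to its copy in `M'` and every arc `e` to the last arc of the path
replacing `e`. Reachability lifts along these paths, so the (strict) ancestor order on vertices
and arcs is preserved, and heads of images are images of heads, so the paths required in (M2.i)
lift as well. For a speciation vertex mapped to `d`, with incomparable out-arcs `a₁ ≠ a₂` of `d`,
use the first arcs of the paths replacing `a₁` and `a₂`: projecting `M'` onto `M` (a subdivision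
vertex goes to the head of the arc it subdivides) preserves reachability, so comparability of
these first arcs would give a directed cycle through `d` in `M`. Finally, a vertex image is
either a leaf or has two distinct out-arcs, hence never lies in `D¹`.
-/

namespace MGraph

variable (G : MGraph V E)

theorem reach_of_head?_of_mem {p : List V} {a w : V} (hp : p.IsChain G.Adj)
    (ha : p.head? = some a) (hw : w ∈ p) : G.Reach a w := by
  obtain ⟨ys, rfl⟩ := List.head?_eq_some_iff.mp ha
  exact hp.induction (G.Reach a) _ (fun _ _ hxy hx => hx.tail hxy) (fun _ => .refl) w hw

theorem reach_getLast?_of_mem {p : List V} {b w : V} (hp : p.IsChain G.Adj)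
    (hb : p.getLast? = some b) (hw : w ∈ p) : G.Reach w b := by
  obtain ⟨ys, rfl⟩ := List.getLast?_eq_some_iff.mp hb
  refine hp.backwards_induction (G.Reach · b) _ (fun _ _ hxy hy => hy.head hxy) (fun _ => ?_) w hw
  rw [List.getLast_append_singleton]
  exact .refl

theorem not_reach_head_tail (hG : G.Acyclic) (e : E) : ¬ G.Reach (G.head e) (G.tail e) :=
  fun h => hG _ (.head' ⟨e, rfl, rfl⟩ h)

theorem head_ne_tail (hG : G.Acyclic) (e : E) : G.head e ≠ G.tail e :=
  fun h => G.not_reach_head_tail hG e (h ▸ .refl)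

theorem ne_of_not_sle_inr {e f : E} (h : ¬ G.sle (.inr e) (.inr f)) : e ≠ f :=
  fun hef => h (.inl (congrArg Sum.inr hef))

theorem not_sle_inr_of_not_reach {e f : E} (hef : e ≠ f)
    (h : ¬ G.Reach (G.head f) (G.tail e)) : ¬ G.sle (.inr e) (.inr f) := by
  rintro (hef' | ⟨-, hreach, -⟩)
  · exact hef (Sum.inr_injective hef')
  · exact h hreach

theorem outDeg_ne_one_of_ne {v : V} {e f : E} (hef : e ≠ f) (he : G.tail e = v)
    (hf : G.tail f = v) : G.outDeg v ≠ 1 := fun h =>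
  hef (congrArg Subtype.val ((Nat.card_eq_one_iff_unique.mp h).1.elim ⟨e, he⟩ ⟨f, hf⟩))

theorem outDeg_ne_zero [Finite E] {v : V} {e : E} (he : G.tail e = v) : G.outDeg v ≠ 0 :=
  Nat.pos_iff_ne_zero.mp (Nat.card_pos_iff.mpr ⟨⟨⟨e, he⟩⟩, inferInstance⟩)

theorem head_injective [Finite E] (h : ∀ v, G.inDeg v ≤ 1) : Function.Injective G.head := by
  intro e f hef
  have : Subsingleton {a : E // G.head a = G.head f} :=
    Finite.card_le_one_iff_subsingleton.mp (h _)
  exact congrArg Subtype.val (Subsingleton.elim (⟨e, hef⟩ : {a // G.head a = G.head f}) ⟨f, rfl⟩)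

end MGraph

section Internals

variable {α : Type}

theorem mem_internals_append_cons {l₁ l₂ : List α} (u : α) (h₁ : l₁ ≠ []) (h₂ : l₂ ≠ []) :
    u ∈ internals (l₁ ++ u :: l₂) := by
  obtain ⟨x, l₁, rfl⟩ := List.exists_cons_of_ne_nil h₁
  simp [internals, List.dropLast_cons_of_ne_nil h₂]

theorem eq_or_mem_internals_of_head? {p l₁ l₂ : List α} {a u : α} (hp : p = l₁ ++ u :: l₂)
    (ha : p.head? = some a) (h₂ : l₂ ≠ []) : u = a ∨ u ∈ internals p := by
  rcases l₁ with _ | ⟨x, l₁⟩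
  · left
    simpa [hp] using ha
  · exact .inr (hp ▸ mem_internals_append_cons u (List.cons_ne_nil x l₁) h₂)

theorem eq_or_mem_internals_of_getLast? {p l₁ l₂ : List α} {b u : α} (hp : p = l₁ ++ u :: l₂)
    (hb : p.getLast? = some b) (h₁ : l₁ ≠ []) : u = b ∨ u ∈ internals p := by
  rcases l₂ with _ | ⟨y, l₂⟩
  · left
    simpa [hp] using hb
  · exact .inr (hp ▸ mem_internals_append_cons u h₁ (List.cons_ne_nil y l₂))

end Internals

namespace MGraph.IsDiPath

variable {G : MGraph V E} {p : List V} {a b : V}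

theorem exists_first_arc (hp : G.IsDiPath p) (ha : p.head? = some a) (hb : p.getLast? = some b)
    (hab : a ≠ b) :
    ∃ f : E, G.tail f = a ∧ (G.head f = b ∨ G.head f ∈ internals p) ∧ G.Reach (G.head f) b := by
  obtain ⟨ys, rfl⟩ := List.head?_eq_some_iff.mp ha
  rcases ys with _ | ⟨v, l⟩
  · exact absurd (by simpa using hb) hab
  obtain ⟨f, hft, hfh⟩ := List.isChain_cons_cons.mp hp.2.1 |>.1
  refine ⟨f, hft, ?_, ?_⟩ <;> rw [hfh]
  · exact eq_or_mem_internals_of_getLast? (l₁ := [a]) rfl hb (List.cons_ne_nil a [])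
  · exact G.reach_getLast?_of_mem hp.2.1 hb (by simp)

theorem exists_last_arc (hp : G.IsDiPath p) (ha : p.head? = some a) (hb : p.getLast? = some b)
    (hab : a ≠ b) : ∃ f : E, G.head f = b ∧ G.tail f ≠ b ∧ G.Reach a (G.tail f) := by
  obtain ⟨ys, rfl⟩ := List.getLast?_eq_some_iff.mp hb
  rcases ys.eq_nil_or_concat' with rfl | ⟨zs, u, rfl⟩
  · exact absurd (by simpa using ha) hab.symm
  have hchain : [u, b].IsChain G.Adj := hp.2.1.infix ⟨zs, [], by simp⟩
  obtain ⟨f, hft, hfh⟩ := List.isChain_pair.mp hchain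
  have hub : u ≠ b := by
    have : [u, b].Nodup := hp.2.2.sublist (by simp)
    simpa using this
  refine ⟨f, hfh, ?_, ?_⟩ <;> rw [hft]
  · exact hub
  · exact G.reach_of_head?_of_mem hp.2.1 ha (by simp)

end MGraph.IsDiPath

namespace IsPMULTree

variable {M : MGraph D U} {lv : Set D} {ρ : D} {χ : S → Set D}

theorem inDeg_le_one (hM : IsPMULTree M lv ρ χ) (v : D) : M.inDeg v ≤ 1 := by
  by_cases hv : v ∈ lv
  · exact ((hM.leaf_iff v).mp hv).2.le
  by_cases hvρ : v = ρ
  · rw [hvρ, hM.root_in]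
    exact zero_le_one
  · exact (hM.inner_deg v hv hvρ).1.le

theorem head_injective (hM : IsPMULTree M lv ρ χ) : Function.Injective M.head :=
  haveI := hM.finU
  M.head_injective hM.inDeg_le_one

theorem tail_ne_of_mem (hM : IsPMULTree M lv ρ χ) {d : D} (hd : d ∈ lv) (e : U) :
    M.tail e ≠ d := fun he =>
  haveI := hM.finU
  M.outDeg_ne_zero he ((hM.leaf_iff d).mp hd).1

end IsPMULTree

/-- `proj` sends each subdivision vertex to the head of the arc of `M` it subdivides. -/
structure SubdivisionMaps {D' U' : Type} (M : MGraph D U) (M' : MGraph D' U') where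
  vmap : D → D'
  proj : D' → D
  firstArc : U → U'
  lastArc : U → U'
  vmap_injective : Function.Injective vmap
  proj_vmap : ∀ d, proj (vmap d) = d
  reach_proj : ∀ {u v}, M'.Reach u v → M.Reach (proj u) (proj v)
  tail_firstArc : ∀ e, M'.tail (firstArc e) = vmap (M.tail e)
  proj_head_firstArc : ∀ e, proj (M'.head (firstArc e)) = M.head e
  reach_head_firstArc : ∀ e, M'.Reach (M'.head (firstArc e)) (vmap (M.head e))
  head_lastArc : ∀ e, M'.head (lastArc e) = vmap (M.head e)
  tail_lastArc_ne : ∀ e, M'.tail (lastArc e) ≠ vmap (M.head e)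
  reach_tail_lastArc : ∀ e, M'.Reach (vmap (M.tail e)) (M'.tail (lastArc e))
  exists_tail_eq_of_tail_eq_vmap : ∀ a d, M'.tail a = vmap d → ∃ e, M.tail e = d

namespace SubdivisionMaps

variable {D' U' : Type} {M : MGraph D U} {M' : MGraph D' U'} (Φ : SubdivisionMaps M M')

def map : D ⊕ U → D' ⊕ U' := Sum.map Φ.vmap Φ.lastArc

@[simp] theorem map_inl (d : D) : Φ.map (.inl d) = .inl (Φ.vmap d) := rfl

@[simp] theorem map_inr (e : U) : Φ.map (.inr e) = .inr (Φ.lastArc e) := rfl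

theorem hpt_map (p : D ⊕ U) : M'.hpt (Φ.map p) = Φ.vmap (M.hpt p) := by
  cases p <;> simp [MGraph.hpt, Φ.head_lastArc]

theorem reach_vmap {a b : D} (h : M.Reach a b) : M'.Reach (Φ.vmap a) (Φ.vmap b) := by
  refine Relation.ReflTransGen.lift' Φ.vmap (fun _ _ ⟨e, he, he'⟩ => ?_) a b h
  subst he he'
  exact (Φ.reach_tail_lastArc e).tail ⟨Φ.lastArc e, rfl, Φ.head_lastArc e⟩

theorem vlt_head_tail_lastArc (e : U) :
    M'.vlt (M'.head (Φ.lastArc e)) (M'.tail (Φ.lastArc e)) :=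
  ⟨.single ⟨_, rfl, rfl⟩, by rw [Φ.head_lastArc]; exact (Φ.tail_lastArc_ne e).symm⟩

theorem slt_map {p q : D ⊕ U} (h : M.slt p q) : M'.slt (Φ.map p) (Φ.map q) := by
  rcases p with x | e <;> rcases q with y | f
  · exact ⟨Φ.reach_vmap h.1, Φ.vmap_injective.ne h.2⟩
  · show M'.Reach (M'.head (Φ.lastArc f)) (Φ.vmap x)
    rw [Φ.head_lastArc]
    exact Φ.reach_vmap h
  · exact (Φ.reach_vmap h).trans (Φ.reach_tail_lastArc e)
  · refine ⟨Φ.vlt_head_tail_lastArc e, ?_, Φ.vlt_head_tail_lastArc f⟩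
    show M'.Reach (M'.head (Φ.lastArc f)) (M'.tail (Φ.lastArc e))
    rw [Φ.head_lastArc]
    exact (Φ.reach_vmap h.2.1).trans (Φ.reach_tail_lastArc e)

theorem sle_map {p q : D ⊕ U} (h : M.sle p q) : M'.sle (Φ.map p) (Φ.map q) :=
  h.imp (congrArg Φ.map) Φ.slt_map

theorem firstArc_injective (hhead : Function.Injective M.head) :
    Function.Injective Φ.firstArc :=
  fun e f h => hhead (by rw [← Φ.proj_head_firstArc e, ← Φ.proj_head_firstArc f, h])

theorem not_sle_firstArc (hM : M.Acyclic) (hhead : Function.Injective M.head) {e f : U}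
    (hef : e ≠ f) (htail : M.tail e = M.tail f) :
    ¬ M'.sle (.inr (Φ.firstArc e)) (.inr (Φ.firstArc f)) := by
  refine M'.not_sle_inr_of_not_reach ((Φ.firstArc_injective hhead).ne hef) fun h => ?_
  have h' := Φ.reach_proj h
  rw [Φ.tail_firstArc, Φ.proj_head_firstArc, Φ.proj_vmap, htail] at h'
  exact M.not_reach_head_tail hM f h'

theorem outDeg_vmap_eq_zero {d : D} (hd : ∀ e, M.tail e ≠ d) : M'.outDeg (Φ.vmap d) = 0 := by
  have : IsEmpty {a : U' // M'.tail a = Φ.vmap d} :=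
    ⟨fun ⟨a, ha⟩ => (Φ.exists_tail_eq_of_tail_eq_vmap a d ha).elim hd⟩
  exact Nat.card_of_isEmpty

end SubdivisionMaps

theorem exists_leftInverse_eq_on_blocks {D' : Type} {ι : D → D'} {I : U → Set D'} (g : U → D)
    (hinj : Function.Injective ι) (hnew : ∀ e, ∀ w ∈ I e, ¬ ∃ d, ι d = w)
    (hdisj : ∀ e f, e ≠ f → ∀ w, w ∈ I e → w ∉ I f)
    (hcover : ∀ w, (∃ d, ι d = w) ∨ ∃ e, w ∈ I e) :
    ∃ π : D' → D, (∀ d, π (ι d) = d) ∧ ∀ e, ∀ w ∈ I e, π w = g e := by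
  classical
  refine ⟨fun w => if h : ∃ d, ι d = w then h.choose else g ((hcover w).resolve_left h).choose,
    fun d => ?_, fun e w hw => ?_⟩
  · have h : ∃ d', ι d' = ι d := ⟨d, rfl⟩
    simp only [dif_pos h]
    exact hinj h.choose_spec
  · have h := hnew e w hw
    simp only [dif_neg h]
    by_contra hne
    exact hdisj _ e (fun h' => hne (by rw [h'])) w ((hcover w).resolve_left h).choose_spec hw

theorem IsSubdivisionOf.exists_subdivisionMaps {D' U' : Type} {M' : MGraph D' U'} {lv' : Set D'}
    {ρ' : D'} {χ' : S → Set D'} {M : MGraph D U} {lv : Set D} {ρ : D} {χ : S → Set D}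
    (hsub : IsSubdivisionOf M' lv' ρ' χ' M lv ρ χ) (hM : M.Acyclic) :
    ∃ Φ : SubdivisionMaps M M', lv' = Φ.vmap '' lv ∧ ∀ x, χ' x = Φ.vmap '' χ x := by
  obtain ⟨ι, P, hinj, -, hlv, hχ, hpath, hnew, hdisj, hcover, harc⟩ := hsub
  have hends (e : U) : ι (M.tail e) ≠ ι (M.head e) := hinj.ne (M.head_ne_tail hM e).symm
  choose fA hfA_tail hfA_head hfA_reach using fun e =>
    (hpath e).1.exists_first_arc (hpath e).2.1 (hpath e).2.2 (hends e)
  choose lA hlA_head hlA_tail hlA_reach using fun e =>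
    (hpath e).1.exists_last_arc (hpath e).2.1 (hpath e).2.2 (hends e)
  obtain ⟨π, hπι, hπI⟩ := exists_leftInverse_eq_on_blocks (I := fun e => {w | w ∈ internals (P e)})
    M.head hinj hnew hdisj hcover
  have hπ_head (e : U) {w : D'} (hw : w = ι (M.head e) ∨ w ∈ internals (P e)) :
      π w = M.head e :=
    hw.elim (fun h => h ▸ hπι _) (hπI e w)
  have hon_path (a : U') : ∃ e, (M'.tail a = ι (M.tail e) ∨ M'.tail a ∈ internals (P e)) ∧
      (M'.head a = ι (M.head e) ∨ M'.head a ∈ internals (P e)) := by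
    obtain ⟨e, l₁, l₂, hPe⟩ := harc a
    exact ⟨e, eq_or_mem_internals_of_head? hPe (hpath e).2.1 (List.cons_ne_nil _ _),
      eq_or_mem_internals_of_getLast? (l₁ := l₁ ++ [M'.tail a]) (l₂ := l₂) (by simp [hPe])
        (hpath e).2.2 (by simp)⟩
  have hproj_adj (a : U') : M.Reach (π (M'.tail a)) (π (M'.head a)) := by
    obtain ⟨e, htail | htail, hhead⟩ := hon_path a
    · rw [htail, hπι, hπ_head e hhead]
      exact .single ⟨e, rfl, rfl⟩
    · rw [hπ_head e (.inr htail), hπ_head e hhead]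
      exact .refl
  have htail_vmap (a : U') (d : D) (ha : M'.tail a = ι d) : ∃ e, M.tail e = d := by
    obtain ⟨e, htail | htail, -⟩ := hon_path a
    · exact ⟨e, hinj (htail.symm.trans ha)⟩
    · exact (hnew e _ htail ⟨d, ha.symm⟩).elim
  let Φ : SubdivisionMaps M M' :=
    { vmap := ι
      proj := π
      firstArc := fA
      lastArc := lA
      vmap_injective := hinj
      proj_vmap := hπι
      reach_proj := fun {u v} => Relation.ReflTransGen.lift' π
        (fun _ _ ⟨a, ha, ha'⟩ => ha ▸ ha' ▸ hproj_adj a) u v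
      tail_firstArc := hfA_tail
      proj_head_firstArc := fun e => hπ_head e (hfA_head e)
      reach_head_firstArc := hfA_reach
      head_lastArc := hlA_head
      tail_lastArc_ne := hlA_tail
      reach_tail_lastArc := hlA_reach
      exists_tail_eq_of_tail_eq_vmap := htail_vmap }
  exact ⟨Φ, hlv, hχ⟩

namespace IsMULRecon

variable {T : MGraph V E} {lvT : Set V} {t : V → Event} {σ : V → S} {M : MGraph D U}
  {lvM : Set D} {χ : S → Set D} {κ : V → D ⊕ U}

theorem mem_or_exists_two_arcs_of_eq_inl (hκ : IsMULRecon T lvT t σ M lvM χ κ) {x : V} {d : D}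
    (hd : κ x = .inl d) : d ∈ lvM ∨ ∃ a₁ a₂ : U, a₁ ≠ a₂ ∧ M.tail a₁ = d ∧ M.tail a₂ = d := by
  by_cases hx : x ∈ lvT
  · obtain ⟨d₀, hd₀, hd₀lv, -⟩ := hκ.M1 x hx
    exact .inl (Sum.inl_injective (hd.symm.trans hd₀) ▸ hd₀lv)
  cases htx : t x
  · obtain ⟨d₀, hd₀, -, -, -, -, -, -, a₁, a₂, ht₁, ht₂, -, -, hi₁₂, -⟩ := hκ.M2i x hx htx
    cases Sum.inl_injective (hd.symm.trans hd₀)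
    exact .inr ⟨a₁, a₂, M.ne_of_not_sle_inr hi₁₂, ht₁, ht₂⟩
  · obtain ⟨a, ha⟩ := hκ.M2ii x hx htx
    simp [ha] at hd

theorem map_subdivision {D' U' : Type} {ρM : D} {M' : MGraph D' U'} {lvM' : Set D'}
    {χ' : S → Set D'} (hκ : IsMULRecon T lvT t σ M lvM χ κ) (hM : IsPMULTree M lvM ρM χ)
    (Φ : SubdivisionMaps M M') (hlv : lvM' = Φ.vmap '' lvM) (hχ : ∀ x, χ' x = Φ.vmap '' χ x) :
    IsMULRecon T lvT t σ M' lvM' χ' (Φ.map ∘ κ) where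
  M0 x d' hd' hD1 := by
    obtain ⟨d, hd, rfl⟩ : ∃ d, κ x = .inl d ∧ Φ.vmap d = d' := by
      rcases hκx : κ x with d | a <;> simp [hκx] at hd'
      exact ⟨d, rfl, hd'⟩
    rcases hκ.mem_or_exists_two_arcs_of_eq_inl hd with hdlv | ⟨a₁, a₂, ha, ht₁, ht₂⟩
    · have hout := hD1.2
      rw [Φ.outDeg_vmap_eq_zero (hM.tail_ne_of_mem hdlv)] at hout
      exact zero_ne_one hout
    · refine M'.outDeg_ne_one_of_ne ((Φ.firstArc_injective hM.head_injective).ne ha) ?_ ?_ hD1.2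
      · rw [Φ.tail_firstArc, ht₁]
      · rw [Φ.tail_firstArc, ht₂]
  M1 x hx := by
    obtain ⟨d, hd, hdlv, hdχ⟩ := hκ.M1 x hx
    exact ⟨Φ.vmap d, by simp [hd], hlv ▸ ⟨d, hdlv, rfl⟩, (hχ _) ▸ ⟨d, hdχ, rfl⟩⟩
  M2i x hx htx := by
    obtain ⟨d, hd, hdlv, c₁, c₂, hc₁, hc₂, hc, a₁, a₂, ht₁, ht₂, hr₁, hr₂, hi₁₂, -⟩ :=
      hκ.M2i x hx htx
    have ha := M.ne_of_not_sle_inr hi₁₂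
    have hreach {a : U} {c : V} (h : M.Reach (M.head a) (M.hpt (κ c))) :
        M'.Reach (M'.head (Φ.firstArc a)) (M'.hpt (Φ.map (κ c))) := by
      rw [Φ.hpt_map]
      exact (Φ.reach_head_firstArc a).trans (Φ.reach_vmap h)
    refine ⟨Φ.vmap d, by simp [hd], fun hd' => ?_, c₁, c₂, hc₁, hc₂, hc, Φ.firstArc a₁,
      Φ.firstArc a₂, by rw [Φ.tail_firstArc, ht₁], by rw [Φ.tail_firstArc, ht₂], hreach hr₁,
      hreach hr₂, Φ.not_sle_firstArc hM.acyclic hM.head_injective ha (ht₁.trans ht₂.symm),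
      Φ.not_sle_firstArc hM.acyclic hM.head_injective ha.symm (ht₂.trans ht₁.symm)⟩
    obtain ⟨d₀, hd₀, h⟩ := hlv ▸ hd'
    exact hdlv (Φ.vmap_injective h ▸ hd₀)
  M2ii x hx htx := by
    obtain ⟨a, ha⟩ := hκ.M2ii x hx htx
    exact ⟨Φ.lastArc a, by simp [ha]⟩
  M3d x y hxy hx hy htx hty := Φ.sle_map (hκ.M3d x y hxy hx hy htx hty)
  M3s x y hxy h := Φ.slt_map (hκ.M3s x y hxy h)

end IsMULRecon

theorem mul_recon_of_subdivision_general {V E D U D' U' S : Type}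
    (T : MGraph V E) (lvT : Set V) (t : V → Event) (σ : V → S)
    (M : MGraph D U) (lvM : Set D) (ρM : D) (χ : S → Set D)
    (hM : IsMULTree M lvM ρM χ)
    (M' : MGraph D' U') (lvM' : Set D') (ρM' : D') (χ' : S → Set D')
    (hsub : IsSubdivisionOf M' lvM' ρM' χ' M lvM ρM χ)
    (κ : V → D ⊕ U) (hκ : IsMULRecon T lvT t σ M lvM χ κ) :
    ∃ κ' : V → D' ⊕ U', IsMULRecon T lvT t σ M' lvM' χ' κ' := by
  obtain ⟨Φ, hlv, hχ⟩ := hsub.exists_subdivisionMaps hM.1.acyclic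
  exact ⟨Φ.map ∘ κ, hκ.map_subdivision hM.1 Φ hlv hχ⟩

/-- If there is a MUL-reconciliation map from the event-labeled gene
    tree `(T;t,σ)` to a MUL-tree `(M,χ)`, then there is a MUL-reconciliation map
    from `(T;t,σ)` to any subdivision `(M',χ)` of `(M,χ)`. -/
theorem mul_recon_of_subdivision {V E D U D' U' S : Type}
    (T : MGraph V E) (lvT : Set V) (ρT : V) (t : V → Event) (σ : V → S)
    (hT : IsGeneTree T lvT ρT σ)
    (M : MGraph D U) (lvM : Set D) (ρM : D) (χ : S → Set D)
    (hM : IsMULTree M lvM ρM χ)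
    (M' : MGraph D' U') (lvM' : Set D') (ρM' : D') (χ' : S → Set D')
    (hsub : IsSubdivisionOf M' lvM' ρM' χ' M lvM ρM χ)
    (κ : V → D ⊕ U) (hκ : IsMULRecon T lvT t σ M lvM χ κ) :
    ∃ κ' : V → D' ⊕ U', IsMULRecon T lvT t σ M' lvM' χ' κ' :=
  mul_recon_of_subdivision_general T lvT t σ M lvM ρM χ hM M' lvM' ρM' χ' hsub κ hκ

end Phylo
end

section
/- Let (T;t,σ) be an event-labeled gene tree, let N be a multi-arc free species network on 𝕊, let μ be a TreeNet-reconciliation map from (T;t,σ) to N, and let (M,χ) be a pseudo MUL-tree that can be folded via a folding map f=(f_V,f_E) to N. Then there exists a MUL-reconciliation map from (T;t,σ) to (M,χ) (namely the lifting κ_{μ,f} of μ along f). -/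
namespace Phylo

variable {V E W F D U S : Type}

/-- A folding map `f = (fV, fE)` from a pseudo MUL-tree `(M,χ)` (with leaf set `lvM`)
    to the network `N` (with species labeling `sp`):
    (F1) `fV` and `fE` are compatible with tails and heads;
    (F2) each leaf of `M` is mapped to the species labeling it;
    (F3) each arc of `N` lifts uniquely at each preimage of its tail. -/
structure IsFoldingMap (M : MGraph D U) (lvM : Set D) (χ : S → Set D)
    (N : MGraph W F) (sp : S → W) (fV : D → W) (fE : U → F) : Prop where
  fV_surj : Function.Surjective fV
  fE_surj : Function.Surjective fE
  F1t : ∀ a : U, N.tail (fE a) = fV (M.tail a)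
  F1h : ∀ a : U, N.head (fE a) = fV (M.head a)
  F2 : ∀ v ∈ lvM, ∀ x : S, v ∈ χ x → fV v = sp x
  F3 : ∀ (a : F) (v : D), fV v = N.tail a → ∃! b : U, fE b = a ∧ M.tail b = v

/-!
The lifting is built top-down along the gene tree, the root going to any preimage of its image.
If `y` is the parent of `x`, then either `μ x = μ y` (two duplications; put `κ x = κ y`) or `μ x`
lies strictly below `μ y`. In the latter case a directed path of `N` leads from `μ y` to `μ x`;
since every arc of `N` lifts uniquely at each preimage of its tail, this path lifts to a path of
`M` starting at `κ y`, and its end is `κ x`. At a speciation `y`, the vertex `μ y` reaches the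
images of two distinct children through distinct arcs `g₁ ≠ g₂`; lifting these two paths places
the two children below distinct arcs out of `κ y`, which are incomparable in the tree `M`.
-/

theorem _root_.WellFounded.exists_forall_children {α β : Type*} {r : α → α → Prop}
    (hwf : WellFounded r) (hpar : ∀ {x y y'}, r y x → r y' x → y = y') (Inv : α → β → Prop)
    (P : (y : α) → β → ({x // r y x} → β) → Prop)
    (hroot : ∀ x, (∀ y, ¬r y x) → ∃ b, Inv x b)
    (hstep : ∀ y b, Inv y b → ∃ K : {x // r y x} → β, (∀ x, Inv x.1 (K x)) ∧ P y b K) :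
    ∃ κ : α → β, (∀ x, Inv x (κ x)) ∧ ∀ y, P y (κ y) fun x => κ x := by
  classical
  choose b₀ hb₀ using hroot
  choose K hKInv hKP using hstep
  let g : ∀ x, {b // Inv x b} := hwf.fix fun x ih =>
    if h : ∃ y, r y x then ⟨K _ _ (ih _ h.choose_spec).2 ⟨x, h.choose_spec⟩,
      hKInv _ _ _ ⟨x, h.choose_spec⟩⟩
    else ⟨b₀ x (not_exists.mp h), hb₀ _ _⟩
  have hg : ∀ y x (h : r y x), (g x).1 = K y _ (g y).2 ⟨x, h⟩ := by
    intro y x h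
    have key : ∀ y' (h' : r y' x), K y' _ (g y').2 ⟨x, h'⟩ = K y _ (g y).2 ⟨x, h⟩ := by
      intro y' h'
      obtain rfl := hpar h' h
      rfl
    rw [show g x = _ from hwf.fix_eq _ x, dif_pos ⟨y, h⟩]
    exact key _ _
  refine ⟨fun x => (g x).1, fun x => (g x).2, fun y => ?_⟩
  show P y (g y).1 fun x => (g x.1).1
  rw [funext fun x : {x // r y x} => hg y x.1 x.2]
  exact hKP y _ (g y).2

namespace MGraph

variable {G : MGraph V E}

theorem reach_tpt_hpt (k : V ⊕ E) : G.Reach (G.tpt k) (G.hpt k) := by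
  cases k with
  | inl v => exact .refl
  | inr e => exact .single ⟨e, rfl, rfl⟩

theorem slt.reach_hpt_tpt {a b : V ⊕ E} (h : G.slt a b) : G.Reach (G.hpt b) (G.tpt a) := by
  cases a <;> cases b
  exacts [h.1, h, h, h.2.1]

theorem transGen_of_slt_inl {m : V ⊕ E} {w : V} (h : G.slt m (.inl w)) :
    Relation.TransGen G.Adj w (G.hpt m) := by
  cases m with
  | inl v => exact (Relation.reflTransGen_iff_eq_or_transGen.mp h.1).resolve_left h.2
  | inr e => exact .tail' h ⟨e, rfl, rfl⟩

theorem vlt.transGen {x y : V} (h : G.vlt x y) : Relation.TransGen G.Adj y x :=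
  (Relation.reflTransGen_iff_eq_or_transGen.mp h.1).resolve_left h.2

theorem outDeg_ne_one {v : V} {a₁ a₂ : E} (h : a₁ ≠ a₂) (h₁ : G.tail a₁ = v) (h₂ : G.tail a₂ = v) :
    G.outDeg v ≠ 1 := fun h1 =>
  h (congrArg Subtype.val ((Nat.card_eq_one_iff_unique.1 h1).1.allEq ⟨a₁, h₁⟩ ⟨a₂, h₂⟩))

namespace Acyclic

theorem wellFounded_adj (hG : G.Acyclic) (hV : Finite V) : WellFounded G.Adj :=
  haveI : Std.Irrefl (Relation.TransGen G.Adj) := ⟨hG⟩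
  (Finite.wellFounded_of_trans_of_irrefl _).mono fun _ _ h => Relation.TransGen.single h

theorem vlt_of_adj (hG : G.Acyclic) {x y : V} (h : G.Adj y x) : G.vlt x y :=
  ⟨.single h, fun e => hG y (.single (e ▸ h))⟩

theorem head_ne_tail (hG : G.Acyclic) (e : E) : G.head e ≠ G.tail e := fun he =>
  hG _ (.single ⟨e, rfl, he⟩)

theorem reach_antisymm (hG : G.Acyclic) {u v : V} (huv : G.Reach u v) (hvu : G.Reach v u) :
    u = v := by
  rcases Relation.reflTransGen_iff_eq_or_transGen.mp huv with h | h
  · exact h.symm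
  · exact absurd (h.trans_left hvu) (hG u)

theorem eq_of_reach_hpt_tpt (hG : G.Acyclic) {a b : V ⊕ E} (hab : G.Reach (G.hpt a) (G.tpt b))
    (hba : G.Reach (G.hpt b) (G.tpt a)) : a = b := by
  have ha := hG.reach_antisymm (G.reach_tpt_hpt a) (hab.trans ((G.reach_tpt_hpt b).trans hba))
  have hb := hG.reach_antisymm (G.reach_tpt_hpt b) (hba.trans ((G.reach_tpt_hpt a).trans hab))
  cases a with
  | inr e => exact absurd ha.symm (hG.head_ne_tail e)
  | inl u =>
    cases b with
    | inr f => exact absurd hb.symm (hG.head_ne_tail f)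
    | inl v => exact congrArg _ (hG.reach_antisymm hab hba)

theorem slt_iff (hG : G.Acyclic) {a b : V ⊕ E} :
    G.slt a b ↔ G.Reach (G.hpt b) (G.tpt a) ∧ a ≠ b := by
  refine ⟨fun h => ⟨h.reach_hpt_tpt, ?_⟩, fun ⟨h, hne⟩ => ?_⟩
  · rintro rfl
    cases a with
    | inl v => exact h.2 rfl
    | inr e => exact hG.head_ne_tail e (hG.reach_antisymm (.single ⟨e, rfl, rfl⟩) h.2.1).symm
  · cases a <;> cases b
    · exact ⟨h, fun e => hne (congrArg _ e)⟩
    · exact h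
    · exact h
    · exact ⟨⟨.single ⟨_, rfl, rfl⟩, hG.head_ne_tail _⟩, h, ⟨.single ⟨_, rfl, rfl⟩, hG.head_ne_tail _⟩⟩

theorem slt_irrefl (hG : G.Acyclic) (a : V ⊕ E) : ¬G.slt a a := fun h =>
  ((hG.slt_iff).1 h).2 rfl

theorem slt_trans (hG : G.Acyclic) {a b c : V ⊕ E} (hab : G.slt a b) (hbc : G.slt b c) :
    G.slt a c := by
  rw [hG.slt_iff] at hab hbc ⊢
  refine ⟨hbc.1.trans ((G.reach_tpt_hpt b).trans hab.1), ?_⟩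
  rintro rfl
  exact hab.2 (hG.eq_of_reach_hpt_tpt hbc.1 hab.1)

theorem sle_trans (hG : G.Acyclic) {a b c : V ⊕ E} (hab : G.sle a b) (hbc : G.sle b c) :
    G.sle a c := by
  rcases hab with rfl | hab
  · exact hbc
  rcases hbc with rfl | hbc
  · exact .inr hab
  exact .inr (hG.slt_trans hab hbc)

theorem slt_of_slt_of_sle (hG : G.Acyclic) {a b c : V ⊕ E} (hab : G.slt a b) (hbc : G.sle b c) :
    G.slt a c := by
  rcases hbc with rfl | hbc
  exacts [hab, hG.slt_trans hab hbc]

theorem slt_of_sle_of_slt (hG : G.Acyclic) {a b c : V ⊕ E} (hab : G.sle a b) (hbc : G.slt b c) :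
    G.slt a c := by
  rcases hab with rfl | hab
  exacts [hbc, hG.slt_trans hab hbc]

theorem not_sle_of_tail_eq (hG : G.Acyclic) {a b : E} (hne : a ≠ b) (ht : G.tail a = G.tail b) :
    ¬G.sle (.inr a) (.inr b) := by
  rintro (h | h)
  · exact hne (Sum.inr_injective h)
  · exact hG (G.tail b) (.head' ⟨b, rfl, rfl⟩ (ht ▸ h.2.1))

theorem sle_and_slt_of_transGen {α : Type} {r q : α → α → Prop} (hG : G.Acyclic)
    (hq : ∀ {x y z}, q x y → q y z → q x z) {κ : α → V ⊕ E}
    (hr : ∀ y x, r y x → G.sle (κ x) (κ y) ∧ (¬q x y → G.slt (κ x) (κ y)))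
    {y x : α} (h : Relation.TransGen r y x) :
    G.sle (κ x) (κ y) ∧ (¬q x y → G.slt (κ x) (κ y)) := by
  induction h with
  | single h => exact hr _ _ h
  | @tail b x _ hbx ih =>
    obtain ⟨hle, hlt⟩ := hr b x hbx
    refine ⟨hG.sle_trans hle ih.1, fun hxy => ?_⟩
    by_cases hxb : q x b
    · exact hG.slt_of_sle_of_slt hle (ih.2 fun hby => hxy (hq hxb hby))
    · exact hG.slt_of_slt_of_sle (hlt hxb) ih.1

end Acyclic

end MGraph

namespace IsGeneTree

variable {T : MGraph V E} {lv : Set V} {ρ : V} {σ : V → S}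

theorem eq_of_adj_of_adj (hT : IsGeneTree T lv ρ σ) {x y y' : V} (h : T.Adj y x)
    (h' : T.Adj y' x) : y = y' := by
  obtain ⟨e, rfl, rfl⟩ := h
  obtain ⟨e', rfl, he'⟩ := h'
  have := hT.finE
  have hρ : T.head e ≠ ρ := fun hρ => by
    have : Nonempty {f // T.head f = T.head e} := ⟨⟨e, rfl⟩⟩
    exact Nat.card_pos.ne' (hρ ▸ hT.root_in)
  have hin : T.inDeg (T.head e) = 1 := by
    by_cases hl : T.head e ∈ lv
    · exact ((hT.leaf_iff _).1 hl).2
    · exact (hT.inner_deg _ hl hρ).1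
  exact congrArg (T.tail ∘ Subtype.val)
    ((Nat.card_eq_one_iff_unique.1 hin).1.allEq ⟨e, rfl⟩ ⟨e', he'⟩)

theorem exists_adj_ne (hT : IsGeneTree T lv ρ σ) {x : V} (hx : x ∉ lv) (c : V) :
    ∃ c', T.Adj x c' ∧ c' ≠ c := by
  have := hT.finE
  have hout : 1 < T.outDeg x := by
    by_cases hρ : x = ρ
    · exact hρ ▸ hT.root_out
    · exact (hT.inner_deg x hx hρ).2
  obtain ⟨⟨e₁, he₁⟩, ⟨e₂, he₂⟩, hne⟩ := (Finite.one_lt_card_iff_nontrivial.1 hout).exists_pair_ne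
  by_cases h : T.head e₁ = c
  · refine ⟨T.head e₂, ⟨e₂, he₂, rfl⟩, fun h₂ => hne ?_⟩
    exact Subtype.ext (hT.multiarc_free _ _ (he₁.trans he₂.symm) (h.trans h₂.symm))
  · exact ⟨T.head e₁, ⟨e₁, he₁, rfl⟩, h⟩

end IsGeneTree

theorem IsPMULTree.mem_of_outDeg_eq_zero {M : MGraph D U} {lv : Set D} {ρ : D} {χ : S → Set D}
    (hM : IsPMULTree M lv ρ χ) {d : D} (h : M.outDeg d = 0) : d ∈ lv := by
  by_contra hd
  by_cases hρ : d = ρ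
  · have := hM.root_out
    subst hρ
    omega
  · have := (hM.inner_deg d hd hρ).2
    omega

theorem IsPMULTree.not_mem_of_tail_eq {M : MGraph D U} {lv : Set D} {ρ : D} {χ : S → Set D}
    (hM : IsPMULTree M lv ρ χ) {a : U} {d : D} (h : M.tail a = d) : d ∉ lv := fun hd => by
  have := hM.finU
  have : Nonempty {b // M.tail b = d} := ⟨⟨a, h⟩⟩
  exact Nat.card_pos.ne' ((hM.leaf_iff d).1 hd).1

/-- Arcs are matched only through their heads: a path of `N` from a speciation to the head of an
arc need not pass through that arc. -/
def IsHeadLift (M : MGraph D U) (N : MGraph W F) (fV : D → W) : D ⊕ U → W ⊕ F → Prop :=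
  Sum.LiftRel (fun d w => fV d = w) (fun b e => fV (M.head b) = N.head e)

namespace IsHeadLift

variable {M : MGraph D U} {N : MGraph W F} {fV : D → W}

theorem hpt_eq {k : D ⊕ U} {m : W ⊕ F} (h : IsHeadLift M N fV k m) : fV (M.hpt k) = N.hpt m := by
  rcases h with ⟨h⟩ | ⟨h⟩ <;> exact h

theorem exists_inl {k : D ⊕ U} {w : W} (h : IsHeadLift M N fV k (.inl w)) :
    ∃ d, k = .inl d ∧ fV d = w := by
  rcases h with ⟨h⟩
  exact ⟨_, rfl, h⟩

theorem exists_inr {k : D ⊕ U} {e : F} (h : IsHeadLift M N fV k (.inr e)) : ∃ b, k = .inr b := by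
  rcases h with ⟨h⟩
  exact ⟨_, rfl⟩

theorem slt_of_reach (hM : M.Acyclic) {k k' : D ⊕ U} {m m' : W ⊕ F} (hk : IsHeadLift M N fV k m)
    (hk' : IsHeadLift M N fV k' m') (hne : m ≠ m') (h : M.Reach (M.hpt k') (M.tpt k)) :
    M.slt k k' := by
  refine hM.slt_iff.2 ⟨h, ?_⟩
  rintro rfl
  rcases hk with ⟨hk⟩ | @⟨b, _, -⟩
  · rcases hk' with ⟨hk'⟩
    exact hne (congrArg _ (hk.symm.trans hk'))
  · exact hM.head_ne_tail b (hM.reach_antisymm (.single ⟨b, rfl, rfl⟩) h).symm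

end IsHeadLift

namespace IsFoldingMap

variable {M : MGraph D U} {lvM : Set D} {χ : S → Set D} {N : MGraph W F} {sp : S → W}
  {fV : D → W} {fE : U → F}

theorem exists_reach_of_reach (hf : IsFoldingMap M lvM χ N sp fV fE) {v : D} {w : W}
    (h : N.Reach (fV v) w) : ∃ d, fV d = w ∧ M.Reach v d := by
  induction h with
  | refl => exact ⟨v, rfl, .refl⟩
  | tail _ hadj ih =>
    obtain ⟨d, rfl, hvd⟩ := ih
    obtain ⟨g, hg, rfl⟩ := hadj
    obtain ⟨b, ⟨rfl, hb⟩, -⟩ := hf.F3 g d hg.symm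
    exact ⟨M.head b, (hf.F1h b).symm, hvd.tail ⟨b, hb, rfl⟩⟩

theorem exists_arc_of_reach_tail (hf : IsFoldingMap M lvM χ N sp fV fE) {v : D} {g : F}
    (h : N.Reach (fV v) (N.tail g)) : ∃ b, fE b = g ∧ M.Reach v (M.tail b) := by
  obtain ⟨d, hd, hvd⟩ := hf.exists_reach_of_reach h
  obtain ⟨b, ⟨hb, rfl⟩, -⟩ := hf.F3 g d hd
  exact ⟨b, hb, hvd⟩

theorem exists_headLift (hf : IsFoldingMap M lvM χ N sp fV fE) (m : W ⊕ F) :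
    ∃ k, IsHeadLift M N fV k m := by
  cases m with
  | inl w =>
    obtain ⟨d, hd⟩ := hf.fV_surj w
    exact ⟨.inl d, .inl hd⟩
  | inr e =>
    obtain ⟨b, rfl⟩ := hf.fE_surj e
    exact ⟨.inr b, .inr (hf.F1h b).symm⟩

theorem exists_headLift_of_reach_tpt (hf : IsFoldingMap M lvM χ N sp fV fE) {v : D}
    {m : W ⊕ F} (h : N.Reach (fV v) (N.tpt m)) :
    ∃ k, IsHeadLift M N fV k m ∧ M.Reach v (M.tpt k) := by
  cases m with
  | inl w =>
    obtain ⟨d, hd, hvd⟩ := hf.exists_reach_of_reach h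
    exact ⟨.inl d, .inl hd, hvd⟩
  | inr e =>
    obtain ⟨b, rfl, hvb⟩ := hf.exists_arc_of_reach_tail h
    exact ⟨.inr b, .inr (hf.F1h b).symm, hvb⟩

theorem exists_headLift_of_reach_head (hf : IsFoldingMap M lvM χ N sp fV fE) {b : U}
    {m : W ⊕ F} (h : N.Reach (fV (M.head b)) (N.hpt m)) :
    ∃ k, IsHeadLift M N fV k m ∧ M.Reach (M.head b) (M.hpt k) ∧ M.Reach (M.tail b) (M.tpt k) := by
  have hb : M.Reach (M.tail b) (M.head b) := .single ⟨b, rfl, rfl⟩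
  cases m with
  | inl w =>
    obtain ⟨d, hd, hbd⟩ := hf.exists_reach_of_reach h
    exact ⟨.inl d, .inl hd, hbd, hb.trans hbd⟩
  | inr e =>
    rcases Relation.reflTransGen_iff_eq_or_transGen.mp h with h | h
    · exact ⟨.inr b, .inr h.symm, .refl, .refl⟩
    · obtain ⟨_, hu, g, rfl, hg⟩ := Relation.TransGen.tail'_iff.mp h
      obtain ⟨b', rfl, hbb'⟩ := hf.exists_arc_of_reach_tail hu
      exact ⟨.inr b', .inr ((hf.F1h b').symm.trans hg), hbb'.tail ⟨b', rfl, rfl⟩, hb.trans hbb'⟩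

theorem outDeg_eq_zero [Finite F] (hf : IsFoldingMap M lvM χ N sp fV fE) {d : D}
    (h : N.outDeg (fV d) = 0) : M.outDeg d = 0 := by
  refine Nat.card_eq_zero.2 (.inl ⟨fun ⟨b, hb⟩ => ?_⟩)
  have : Nonempty {e // N.tail e = fV d} := ⟨⟨fE b, by rw [hf.F1t, hb]⟩⟩
  exact Nat.card_pos.ne' h

theorem mem_chi_of_fV_eq {lvN : Set W} {ρN : W} {ρM : D} (hN : IsNetwork N lvN ρN)
    (hsp : IsLeafLabeling N lvN sp) (hM : IsPMULTree M lvM ρM χ)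
    (hf : IsFoldingMap M lvM χ N sp fV fE) {d : D} {s : S} (h : fV d = sp s) :
    d ∈ lvM ∧ d ∈ χ s := by
  have := hN.finE
  have hleaf : N.outDeg (fV d) = 0 := h ▸ ((hN.leaf_iff _).1 (hsp.mem s)).1
  have hd : d ∈ lvM := hM.mem_of_outDeg_eq_zero (hf.outDeg_eq_zero hleaf)
  obtain ⟨s', hs'⟩ := hM.chi_cover d hd
  obtain rfl : s' = s := hsp.inj ((hf.F2 d hd s' hs').symm.trans h)
  exact ⟨hd, hs'⟩

end IsFoldingMap

def BothDupl (lvT : Set V) (t : V → Event) (x y : V) : Prop :=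
  x ∉ lvT ∧ y ∉ lvT ∧ t x = Event.dupl ∧ t y = Event.dupl

theorem BothDupl.trans {lvT : Set V} {t : V → Event} {x y z : V} (hxy : BothDupl lvT t x y)
    (hyz : BothDupl lvT t y z) : BothDupl lvT t x z :=
  ⟨hxy.1, hyz.2.1, hxy.2.2.1, hyz.2.2.2⟩

theorem not_bothDupl_of_spec {lvT : Set V} {t : V → Event} {x y : V} (hs : t y = Event.spec) :
    ¬BothDupl lvT t x y := fun h => by
  cases hs.symm.trans h.2.2.2

section Lifting

variable {T : MGraph V E} {lvT : Set V} {ρT : V} {t : V → Event} {σ : V → S}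
  {N : MGraph W F} {sp : S → W} {μ : V → W ⊕ F}
  {M : MGraph D U} {lvM : Set D} {ρM : D} {χ : S → Set D} {fV : D → W} {fE : U → F}

theorem IsTreeNetRecon.slt_of_vlt_of_ne (hμ : IsTreeNetRecon T lvT t σ N sp μ) {x y : V}
    (hxy : T.vlt x y) (hne : μ x ≠ μ y) : N.slt (μ x) (μ y) := by
  by_cases hd : BothDupl lvT t x y
  · exact (hμ.R3d x y hxy hd.1 hd.2.1 hd.2.2.1 hd.2.2.2).resolve_left hne
  · exact hμ.R3s x y hxy hd

theorem exists_separating_children (hT : IsGeneTree T lvT ρT σ)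
    (hμ : IsTreeNetRecon T lvT t σ N sp μ) {x : V} (hx : x ∉ lvT) (hs : t x = Event.spec) :
    ∃ w, μ x = .inl w ∧ ∃ c₁ c₂ g₁ g₂, T.Adj x c₁ ∧ T.Adj x c₂ ∧ c₁ ≠ c₂ ∧
      N.tail g₁ = w ∧ N.tail g₂ = w ∧ g₁ ≠ g₂ ∧
      N.Reach (N.head g₁) (N.hpt (μ c₁)) ∧ N.Reach (N.head g₂) (N.hpt (μ c₂)) := by
  obtain ⟨w, hw, c₁, c₂, hc₁, hc₂, u₁, u₂, hu, ⟨g₁, hg₁, rfl⟩, ⟨g₂, hg₂, rfl⟩, hr₁, hr₂⟩ :=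
    hμ.R2i x hx hs
  refine ⟨w, hw, ?_⟩
  have hg : g₁ ≠ g₂ := fun h => hu (h ▸ rfl)
  by_cases hc : c₁ = c₂
  · subst hc
    -- pair `c₁` with another child `c`, routing `c₁` through whichever of `g₁`, `g₂` is not
    -- the first arc `g` on the way to `μ c`
    obtain ⟨c, hc, hne⟩ := hT.exists_adj_ne hx c₁
    have hlt : N.slt (μ c) (.inl w) :=
      hw ▸ hμ.R3s c x (hT.acyclic.vlt_of_adj hc) (not_bothDupl_of_spec hs)
    obtain ⟨_, ⟨g, hg', rfl⟩, hgr⟩ := Relation.TransGen.head'_iff.mp (N.transGen_of_slt_inl hlt)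
    by_cases h₁ : g = g₁
    · exact ⟨c, c₁, g, g₂, hc, hc₁, hne, hg', hg₂, h₁ ▸ hg, hgr, hr₂⟩
    · exact ⟨c, c₁, g, g₁, hc, hc₁, hne, hg', hg₁, h₁, hgr, hr₁⟩
  · exact ⟨c₁, c₂, g₁, g₂, hc₁, hc₂, hc, hg₁, hg₂, hg, hr₁, hr₂⟩

theorem exists_childLift (hT : T.Acyclic) (hN : N.Acyclic) (hM : M.Acyclic)
    (hμ : IsTreeNetRecon T lvT t σ N sp μ) (hf : IsFoldingMap M lvM χ N sp fV fE) {x y : V}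
    (hyx : T.Adj y x) {k : D ⊕ U} (hk : IsHeadLift M N fV k (μ y)) :
    ∃ k', IsHeadLift M N fV k' (μ x) ∧ M.sle k' k ∧ (¬BothDupl lvT t x y → M.slt k' k) := by
  have hxy := hT.vlt_of_adj hyx
  by_cases heq : μ x = μ y
  · refine ⟨k, heq ▸ hk, .inl rfl, fun hd => ?_⟩
    have hlt := hμ.R3s x y hxy hd
    rw [heq] at hlt
    exact absurd hlt (hN.slt_irrefl _)
  · have hreach : N.Reach (fV (M.hpt k)) (N.tpt (μ x)) :=
      hk.hpt_eq ▸ (hμ.slt_of_vlt_of_ne hxy heq).reach_hpt_tpt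
    obtain ⟨k', hk', hr⟩ := hf.exists_headLift_of_reach_tpt hreach
    have hlt := hk'.slt_of_reach hM hk heq hr
    exact ⟨k', hk', .inr hlt, fun _ => hlt⟩

theorem exists_childLift_via_arc (hM : M.Acyclic) (hf : IsFoldingMap M lvM χ N sp fV fE)
    {k : D ⊕ U} {m m' : W ⊕ F} (hk : IsHeadLift M N fV k m) {b : U} (hb : M.tail b = M.hpt k)
    (hne : m' ≠ m) (h : N.Reach (N.head (fE b)) (N.hpt m')) :
    ∃ k', IsHeadLift M N fV k' m' ∧ M.slt k' k ∧ M.Reach (M.head b) (M.hpt k') := by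
  obtain ⟨k', hk', hbk', htk'⟩ := hf.exists_headLift_of_reach_head (hf.F1h b ▸ h)
  exact ⟨k', hk', hk'.slt_of_reach hM hk hne (hb ▸ htk'), hbk'⟩

def LiftStep (T : MGraph V E) (lvT : Set V) (t : V → Event) (M : MGraph D U) (lvM : Set D)
    (y : V) (k : D ⊕ U) (K : {x // T.Adj y x} → D ⊕ U) : Prop :=
  (∀ x, M.sle (K x) k ∧ (¬BothDupl lvT t x y → M.slt (K x) k)) ∧
  (y ∉ lvT → t y = Event.spec → ∃ d, k = .inl d ∧ d ∉ lvM ∧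
    ∃ c₁ c₂ : {x // T.Adj y x}, c₁ ≠ c₂ ∧ ∃ a₁ a₂ : U, M.tail a₁ = d ∧ M.tail a₂ = d ∧
      M.Reach (M.head a₁) (M.hpt (K c₁)) ∧ M.Reach (M.head a₂) (M.hpt (K c₂)) ∧
      ¬M.sle (.inr a₁) (.inr a₂) ∧ ¬M.sle (.inr a₂) (.inr a₁))

theorem exists_liftStep_of_spec (hT : IsGeneTree T lvT ρT σ) (hN : N.Acyclic)
    (hμ : IsTreeNetRecon T lvT t σ N sp μ) (hM : IsPMULTree M lvM ρM χ)
    (hf : IsFoldingMap M lvM χ N sp fV fE) {y : V} (hy : y ∉ lvT) (hs : t y = Event.spec)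
    {k : D ⊕ U} (hk : IsHeadLift M N fV k (μ y)) :
    ∃ K : {x // T.Adj y x} → D ⊕ U, (∀ x, IsHeadLift M N fV (K x) (μ x)) ∧
      LiftStep T lvT t M lvM y k K := by
  obtain ⟨w, hw, c₁, c₂, g₁, g₂, hc₁, hc₂, hc, hg₁, hg₂, hg, hr₁, hr₂⟩ :=
    exists_separating_children hT hμ hy hs
  obtain ⟨d, rfl, hd⟩ := (hw ▸ hk).exists_inl
  obtain ⟨b₁, ⟨rfl, hb₁⟩, -⟩ := hf.F3 g₁ d (hd.trans hg₁.symm)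
  obtain ⟨b₂, ⟨rfl, hb₂⟩, -⟩ := hf.F3 g₂ d (hd.trans hg₂.symm)
  have hchild : ∀ x : {x // T.Adj y x}, ∃ k', IsHeadLift M N fV k' (μ x) ∧ M.slt k' (.inl d) ∧
      (x.1 = c₁ → M.Reach (M.head b₁) (M.hpt k')) ∧
      (x.1 = c₂ → M.Reach (M.head b₂) (M.hpt k')) := by
    rintro ⟨x, hx⟩
    have hne : μ x ≠ μ y := fun h => hN.slt_irrefl (μ y) <| h ▸
      hμ.R3s x y (hT.acyclic.vlt_of_adj hx) (not_bothDupl_of_spec hs)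
    by_cases h₁ : x = c₁
    · subst h₁
      obtain ⟨k', hk', hlt, hr⟩ := exists_childLift_via_arc hM.acyclic hf hk hb₁ hne hr₁
      exact ⟨k', hk', hlt, fun _ => hr, fun h => absurd h hc⟩
    by_cases h₂ : x = c₂
    · subst h₂
      obtain ⟨k', hk', hlt, hr⟩ := exists_childLift_via_arc hM.acyclic hf hk hb₂ hne hr₂
      exact ⟨k', hk', hlt, fun h => absurd h.symm hc, fun _ => hr⟩
    obtain ⟨k', hk', -, hlt⟩ := exists_childLift hT.acyclic hN hM.acyclic hμ hf hx hk
    exact ⟨k', hk', hlt (not_bothDupl_of_spec hs), fun h => absurd h h₁, fun h => absurd h h₂⟩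
  choose K hK using hchild
  have hb : b₁ ≠ b₂ := fun h => hg (congrArg fE h)
  refine ⟨K, fun x => (hK x).1, fun x => ⟨.inr (hK x).2.1, fun _ => (hK x).2.1⟩, fun _ _ => ?_⟩
  exact ⟨d, rfl, hM.not_mem_of_tail_eq hb₁, ⟨c₁, hc₁⟩, ⟨c₂, hc₂⟩,
    fun h => hc (congrArg Subtype.val h), b₁, b₂, hb₁, hb₂, (hK _).2.2.1 rfl, (hK _).2.2.2 rfl,
    hM.acyclic.not_sle_of_tail_eq hb (hb₁.trans hb₂.symm),
    hM.acyclic.not_sle_of_tail_eq hb.symm (hb₂.trans hb₁.symm)⟩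

theorem exists_liftStep (hT : IsGeneTree T lvT ρT σ) (hN : N.Acyclic)
    (hμ : IsTreeNetRecon T lvT t σ N sp μ) (hM : IsPMULTree M lvM ρM χ)
    (hf : IsFoldingMap M lvM χ N sp fV fE) (y : V) (k : D ⊕ U)
    (hk : IsHeadLift M N fV k (μ y)) :
    ∃ K : {x // T.Adj y x} → D ⊕ U, (∀ x, IsHeadLift M N fV (K x) (μ x)) ∧
      LiftStep T lvT t M lvM y k K := by
  by_cases hy : y ∉ lvT ∧ t y = Event.spec
  · exact exists_liftStep_of_spec hT hN hμ hM hf hy.1 hy.2 hk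
  · choose K hK using fun x : {x // T.Adj y x} =>
      exists_childLift hT.acyclic hN hM.acyclic hμ hf x.2 hk
    exact ⟨K, fun x => (hK x).1, fun x => (hK x).2, fun h₁ h₂ => absurd ⟨h₁, h₂⟩ hy⟩

theorem exists_lifting (hT : IsGeneTree T lvT ρT σ) (hN : N.Acyclic)
    (hμ : IsTreeNetRecon T lvT t σ N sp μ) (hM : IsPMULTree M lvM ρM χ)
    (hf : IsFoldingMap M lvM χ N sp fV fE) :
    ∃ κ : V → D ⊕ U, (∀ x, IsHeadLift M N fV (κ x) (μ x)) ∧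
      ∀ y, LiftStep T lvT t M lvM y (κ y) fun x => κ x :=
  (hT.acyclic.wellFounded_adj hT.finV).exists_forall_children hT.eq_of_adj_of_adj
    (fun x k => IsHeadLift M N fV k (μ x)) (LiftStep T lvT t M lvM)
    (fun x _ => hf.exists_headLift (μ x)) (exists_liftStep hT hN hμ hM hf)

end Lifting

theorem lifting_is_mul_recon_general {V E D U W F S : Type}
    (T : MGraph V E) (lvT : Set V) (ρT : V) (t : V → Event) (σ : V → S)
    (hT : IsGeneTree T lvT ρT σ)
    (N : MGraph W F) (lvN : Set W) (ρN : W) (sp : S → W)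
    (hN : IsNetwork N lvN ρN)
    (hsp : IsLeafLabeling N lvN sp)
    (μ : V → W ⊕ F) (hμ : IsTreeNetRecon T lvT t σ N sp μ)
    (M : MGraph D U) (lvM : Set D) (ρM : D) (χ : S → Set D)
    (hM : IsPMULTree M lvM ρM χ)
    (fV : D → W) (fE : U → F) (hf : IsFoldingMap M lvM χ N sp fV fE) :
    ∃ κ : V → D ⊕ U, IsMULRecon T lvT t σ M lvM χ κ := by
  obtain ⟨κ, hlift, hstep⟩ := exists_lifting hT hN.acyclic hμ hM hf
  have hleaf : ∀ x ∈ lvT, ∃ d, κ x = .inl d ∧ d ∈ lvM ∧ d ∈ χ (σ x) := fun x hx => by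
    obtain ⟨d, hd, hfd⟩ := (hμ.R1 x hx ▸ hlift x).exists_inl
    exact ⟨d, hd, hf.mem_chi_of_fV_eq hN hsp hM hfd⟩
  have hdupl : ∀ x, x ∉ lvT → t x = Event.dupl → ∃ a, κ x = .inr a := fun x hx hd =>
    (hμ.R2ii x hx hd).elim fun _ he => (he ▸ hlift x).exists_inr
  have horder : ∀ {x y}, T.vlt x y →
      M.sle (κ x) (κ y) ∧ (¬BothDupl lvT t x y → M.slt (κ x) (κ y)) := fun hxy =>
    hM.acyclic.sle_and_slt_of_transGen BothDupl.trans (fun y x h => (hstep y).1 ⟨x, h⟩) hxy.transGen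
  refine ⟨κ, fun x d hxd hd₁ => ?_, hleaf, fun x hx hs => ?_, hdupl,
    fun x y hxy _ _ _ _ => (horder hxy).1, fun x y hxy h => (horder hxy).2 h⟩
  · by_cases hx : x ∈ lvT
    · obtain ⟨_, hd, hl, -⟩ := hleaf x hx
      cases hxd.symm.trans hd
      exact absurd (((hM.leaf_iff d).1 hl).1.symm.trans hd₁.2) zero_ne_one
    cases htx : t x with
    | spec =>
      obtain ⟨_, hd, -, -, -, -, a₁, a₂, h₁, h₂, -, -, hinc, -⟩ := (hstep x).2 hx htx
      cases hxd.symm.trans hd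
      exact M.outDeg_ne_one (fun h => hinc (by rw [h]; exact .inl rfl)) h₁ h₂ hd₁.2
    | dupl =>
      obtain ⟨_, ha⟩ := hdupl x hx htx
      cases hxd.symm.trans ha
  · obtain ⟨d, hd, hdl, c₁, c₂, hc, rest⟩ := (hstep x).2 hx hs
    exact ⟨d, hd, hdl, c₁, c₂, c₁.2, c₂.2, fun h => hc (Subtype.ext h), rest⟩

/-- Let `(T;t,σ)` be an event-labeled gene tree, `N` a multi-arc
    free species network on `𝕊`, `μ` a TreeNet-reconciliation map from `(T;t,σ)`
    to `N`, and `(M,χ)` a pseudo MUL-tree that can be folded via a folding map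
    `f = (fV,fE)` to `N`. Then there exists a MUL-reconciliation map from
    `(T;t,σ)` to `(M,χ)` (namely the lifting `κ_{μ,f}` of `μ` along `f`). -/
theorem lifting_is_mul_recon {V E D U W F S : Type}
    (T : MGraph V E) (lvT : Set V) (ρT : V) (t : V → Event) (σ : V → S)
    (hT : IsGeneTree T lvT ρT σ)
    (N : MGraph W F) (lvN : Set W) (ρN : W) (sp : S → W)
    (hN : IsNetwork N lvN ρN) (hmf : N.MultiArcFree)
    (hsp : IsLeafLabeling N lvN sp)
    (μ : V → W ⊕ F) (hμ : IsTreeNetRecon T lvT t σ N sp μ)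
    (M : MGraph D U) (lvM : Set D) (ρM : D) (χ : S → Set D)
    (hM : IsPMULTree M lvM ρM χ)
    (fV : D → W) (fE : U → F) (hf : IsFoldingMap M lvM χ N sp fV fE) :
    ∃ κ : V → D ⊕ U, IsMULRecon T lvT t σ M lvM χ κ :=
  lifting_is_mul_recon_general T lvT ρT t σ hT N lvN ρN sp hN hsp μ hμ M lvM ρM χ hM fV fE hf

end Phylo
end
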